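/- arXiv:math/0510218 — 3 statements merged into one kernel-verified Lean document; each statement's English description precedes it below -/
import Mathlib

section
/- Let F = MonoidAlgebra ℚ (FreeMonoid ℕ) with the three bilinear operations ≺, ∘, ≻ defined on basis words by Loday–Ronco's max-letter rule. Then for all x, y, z ∈ F, (x ≺ y + x ∘ y + x ≻ y) ≻ z = x ≻ (y ≻ z). -/
/-! The sum `≺ + ∘ + ≻` forgets the comparison of maxima and is just the concatenation of
nonempty words. Both sides of the identity are then restrictions of the associative
concatenation product `u v w` to the same set of triples of words: nonempty `u, v, w` with
`max u < max w` and `max v < max w`. -/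

/-- The right operation `≻` of the Loday–Ronco dendriform trialgebra structure on
noncommutative polynomials: on basis words, `u ≻ v = uv` if `u, v` are nonempty and
`max u < max v`, and `0` otherwise; extended bilinearly. -/
noncomputable def trSucc {α : Type*} [LinearOrder α]
    (x y : MonoidAlgebra ℚ (FreeMonoid α)) : MonoidAlgebra ℚ (FreeMonoid α) :=
  x.coeff.sum fun u a => y.coeff.sum fun v b =>
    if u.toList ≠ [] ∧ v.toList ≠ [] ∧ u.toList.maximum < v.toList.maximum
    then MonoidAlgebra.single (u * v) (a * b) else 0

/-- The middle operation `∘`: on basis words, `u ∘ v = uv` if `u, v` are nonempty and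
`max u = max v`, and `0` otherwise; extended bilinearly. -/
noncomputable def trCirc {α : Type*} [LinearOrder α]
    (x y : MonoidAlgebra ℚ (FreeMonoid α)) : MonoidAlgebra ℚ (FreeMonoid α) :=
  x.coeff.sum fun u a => y.coeff.sum fun v b =>
    if u.toList ≠ [] ∧ v.toList ≠ [] ∧ u.toList.maximum = v.toList.maximum
    then MonoidAlgebra.single (u * v) (a * b) else 0

/-- The left operation `≺`: on basis words, `u ≺ v = uv` if `u, v` are nonempty and
`max u > max v`, and `0` otherwise; extended bilinearly. -/
noncomputable def trPrec {α : Type*} [LinearOrder α]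
    (x y : MonoidAlgebra ℚ (FreeMonoid α)) : MonoidAlgebra ℚ (FreeMonoid α) :=
  x.coeff.sum fun u a => y.coeff.sum fun v b =>
    if u.toList ≠ [] ∧ v.toList ≠ [] ∧ v.toList.maximum < u.toList.maximum
    then MonoidAlgebra.single (u * v) (a * b) else 0

open MonoidAlgebra

noncomputable def restrictedMul {R M : Type*} [Semiring R] [Monoid M] (P : M → M → Prop)
    [DecidableRel P] (x y : MonoidAlgebra R M) : MonoidAlgebra R M :=
  x.coeff.sum fun u a => y.coeff.sum fun v b => if P u v then single (u * v) (a * b) else 0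

namespace restrictedMul

variable {R M : Type*} [Semiring R] [Monoid M] (P : M → M → Prop) [DecidableRel P]

@[simp]
lemma zero_left (y : MonoidAlgebra R M) : restrictedMul P 0 y = 0 := by
  simp [restrictedMul]

@[simp]
lemma zero_right (x : MonoidAlgebra R M) : restrictedMul P x 0 = 0 := by
  simp [restrictedMul]

@[simp]
lemma add_left (x₁ x₂ y : MonoidAlgebra R M) :
    restrictedMul P (x₁ + x₂) y = restrictedMul P x₁ y + restrictedMul P x₂ y := by
  refine Finsupp.sum_add_index' (fun u => ?_) fun u a₁ a₂ => ?_
  · exact Finset.sum_eq_zero fun v _ => by simp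
  · rw [← Finsupp.sum_add]
    congr 1; funext v b
    split_ifs
    · rw [add_mul, single_add]
    · rw [add_zero]

@[simp]
lemma add_right (x y₁ y₂ : MonoidAlgebra R M) :
    restrictedMul P x (y₁ + y₂) = restrictedMul P x y₁ + restrictedMul P x y₂ := by
  unfold restrictedMul
  rw [← Finsupp.sum_add]
  congr 1; funext u a
  refine Finsupp.sum_add_index' (fun v => by simp) fun v b₁ b₂ => ?_
  split_ifs
  · rw [mul_add, single_add]
  · rw [add_zero]

@[simp]
lemma single_single (u v : M) (a b : R) :
    restrictedMul P (single u a) (single v b) = if P u v then single (u * v) (a * b) else 0 := by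
  simp [restrictedMul, coeff_single, Finsupp.sum_single_index]

variable {P}

lemma congr_rel {Q : M → M → Prop} [DecidableRel Q] (h : ∀ u v, P u v ↔ Q u v) :
    restrictedMul P = restrictedMul (R := R) Q := by
  obtain rfl : P = Q := funext₂ fun u v => propext (h u v)
  congr!

lemma add_of_disjoint {Q : M → M → Prop} [DecidableRel Q] (h : ∀ u v, ¬(P u v ∧ Q u v))
    (x y : MonoidAlgebra R M) :
    restrictedMul P x y + restrictedMul Q x y = restrictedMul (fun u v => P u v ∨ Q u v) x y := by
  induction x using induction_linear with
  | zero => simp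
  | add x₁ x₂ h₁ h₂ => simp only [add_left, ← h₁, ← h₂]; abel
  | single u a =>
    induction y using induction_linear with
    | zero => simp
    | add y₁ y₂ h₁ h₂ => simp only [add_right, ← h₁, ← h₂]; abel
    | single v b =>
      have := h u v
      simp only [single_single]
      split_ifs <;> simp_all

lemma assoc_of_iff {Q P' Q' : M → M → Prop} [DecidableRel Q] [DecidableRel P'] [DecidableRel Q']
    (h : ∀ u v w, P u v ∧ Q (u * v) w ↔ P' v w ∧ Q' u (v * w)) (x y z : MonoidAlgebra R M) :
    restrictedMul Q (restrictedMul P x y) z = restrictedMul Q' x (restrictedMul P' y z) := by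
  induction x using induction_linear with
  | zero => simp
  | add x₁ x₂ h₁ h₂ => simp only [add_left, h₁, h₂]
  | single u a =>
    induction y using induction_linear with
    | zero => simp
    | add y₁ y₂ h₁ h₂ => simp only [add_left, add_right, h₁, h₂]
    | single v b =>
      induction z using induction_linear with
      | zero => simp
      | add z₁ z₂ h₁ h₂ => simp only [add_right, h₁, h₂]
      | single w c =>
        have := h u v w
        simp only [single_single]
        split_ifs <;> simp_all [mul_assoc]

end restrictedMul

section LinearOrder

variable {α : Type*} [LinearOrder α]

lemma trSucc_eq_restrictedMul (x y : MonoidAlgebra ℚ (FreeMonoid α)) :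
    trSucc x y =
      restrictedMul (fun u v => u.toList ≠ [] ∧ v.toList ≠ [] ∧
        u.toList.maximum < v.toList.maximum) x y :=
  rfl

lemma trCirc_eq_restrictedMul (x y : MonoidAlgebra ℚ (FreeMonoid α)) :
    trCirc x y =
      restrictedMul (fun u v => u.toList ≠ [] ∧ v.toList ≠ [] ∧
        u.toList.maximum = v.toList.maximum) x y :=
  rfl

lemma trPrec_eq_restrictedMul (x y : MonoidAlgebra ℚ (FreeMonoid α)) :
    trPrec x y =
      restrictedMul (fun u v => u.toList ≠ [] ∧ v.toList ≠ [] ∧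
        v.toList.maximum < u.toList.maximum) x y :=
  rfl

lemma trPrec_add_trCirc_add_trSucc (x y : MonoidAlgebra ℚ (FreeMonoid α)) :
    trPrec x y + trCirc x y + trSucc x y =
      restrictedMul (fun u v => u.toList ≠ [] ∧ v.toList ≠ []) x y := by
  rw [trPrec_eq_restrictedMul, trCirc_eq_restrictedMul, trSucc_eq_restrictedMul,
    restrictedMul.add_of_disjoint fun u v h => h.1.2.2.ne' h.2.2.2,
    restrictedMul.add_of_disjoint fun u v h => ?_]
  · refine congrFun₂ (restrictedMul.congr_rel fun u v => ?_) x y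
    have := lt_trichotomy u.toList.maximum v.toList.maximum
    tauto
  · obtain ⟨⟨-, -, h₁⟩ | ⟨-, -, h₁⟩, -, -, h₂⟩ := h
    exacts [lt_asymm h₁ h₂, h₁.not_lt h₂]

lemma nonempty_and_maximum_lt_iff (u v w : FreeMonoid α) :
    (u.toList ≠ [] ∧ v.toList ≠ []) ∧
        ((u * v).toList ≠ [] ∧ w.toList ≠ [] ∧ (u * v).toList.maximum < w.toList.maximum) ↔
      (v.toList ≠ [] ∧ w.toList ≠ [] ∧ v.toList.maximum < w.toList.maximum) ∧
        (u.toList ≠ [] ∧ (v * w).toList ≠ [] ∧ u.toList.maximum < (v * w).toList.maximum) := by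
  simp only [FreeMonoid.toList_mul, List.maximum_append, max_lt_iff, lt_max_iff, ne_eq,
    List.append_eq_nil_iff]
  have := lt_trans (a := u.toList.maximum) (b := v.toList.maximum) (c := w.toList.maximum)
  tauto

end LinearOrder

/-- Dendriform trialgebra axiom: `(x ≺ y + x ∘ y + x ≻ y) ≻ z = x ≻ (y ≻ z)`. -/
theorem sum_succ (x y z : MonoidAlgebra ℚ (FreeMonoid ℕ)) :
    trSucc (trPrec x y + trCirc x y + trSucc x y) z = trSucc x (trSucc y z) := by
  rw [trPrec_add_trCirc_add_trSucc, trSucc_eq_restrictedMul]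
  exact restrictedMul.assoc_of_iff nonempty_and_maximum_lt_iff x y z
end

section
/- Let F = MonoidAlgebra ℚ (FreeMonoid ℕ) with the three bilinear operations ≺, ∘, ≻ defined on basis words by Loday–Ronco's max-letter rule. Then for all x, y, z ∈ F, (x ≺ y) ∘ z = x ∘ (y ≻ z). -/
/-! The three operations are, definitionally, of the form `restrictedMul p`: concatenation of
basis words `u`, `v`, kept only when `p u v` holds. By trilinearity the identity reduces to single
words `u`, `v`, `w`, where both sides are `uvw` exactly when all three are nonempty and
`max v < max u = max w`, and `0` otherwise. -/

namespace MonoidAlgebra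

variable {k M : Type*} [Semiring k]

noncomputable def restrictedMul [Mul M] (p : M → M → Prop) [DecidableRel p] (x y : k[M]) : k[M] :=
  x.coeff.sum fun u a => y.coeff.sum fun v b =>
    if p u v then single (u * v) (a * b) else 0

section Mul

variable [Mul M] (p : M → M → Prop) [DecidableRel p]

@[simp]
theorem zero_restrictedMul (y : k[M]) : restrictedMul p 0 y = 0 := by
  simp [restrictedMul]

@[simp]
theorem restrictedMul_zero (x : k[M]) : restrictedMul p x 0 = 0 := by
  simp [restrictedMul]

theorem single_restrictedMul_single (u v : M) (a b : k) :
    restrictedMul p (single u a) (single v b) =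
      if p u v then single (u * v) (a * b) else 0 := by
  simp [restrictedMul, coeff_single]

theorem add_restrictedMul (x₁ x₂ y : k[M]) :
    restrictedMul p (x₁ + x₂) y = restrictedMul p x₁ y + restrictedMul p x₂ y := by
  refine Finsupp.sum_add_index' (fun u => ?_) fun u a₁ a₂ => ?_
  · simp
  · rw [← Finsupp.sum_add]
    refine Finsupp.sum_congr fun v _ => ?_
    split_ifs <;> simp [add_mul]

theorem restrictedMul_add (x y₁ y₂ : k[M]) :
    restrictedMul p x (y₁ + y₂) = restrictedMul p x y₁ + restrictedMul p x y₂ := by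
  rw [restrictedMul, restrictedMul, restrictedMul, ← Finsupp.sum_add]
  refine Finsupp.sum_congr fun u _ => Finsupp.sum_add_index' (fun v => ?_) fun v b₁ b₂ => ?_
  · simp
  · split_ifs <;> simp [mul_add]

end Mul

theorem restrictedMul_restrictedMul [Semigroup M] {p q r s : M → M → Prop}
    [DecidableRel p] [DecidableRel q] [DecidableRel r] [DecidableRel s]
    (h : ∀ u v w, p u v ∧ q (u * v) w ↔ r v w ∧ s u (v * w)) (x y z : k[M]) :
    restrictedMul q (restrictedMul p x y) z = restrictedMul s x (restrictedMul r y z) := by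
  induction x using MonoidAlgebra.induction_linear with
  | zero => simp
  | add x₁ x₂ h₁ h₂ => rw [add_restrictedMul, add_restrictedMul, add_restrictedMul, h₁, h₂]
  | single u a =>
    induction y using MonoidAlgebra.induction_linear with
    | zero => simp
    | add y₁ y₂ h₁ h₂ =>
      rw [restrictedMul_add, add_restrictedMul, add_restrictedMul, restrictedMul_add, h₁, h₂]
    | single v b =>
      induction z using MonoidAlgebra.induction_linear with
      | zero => simp
      | add z₁ z₂ h₁ h₂ => rw [restrictedMul_add, restrictedMul_add, restrictedMul_add, h₁, h₂]
      | single w c =>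
        rw [single_restrictedMul_single, single_restrictedMul_single,
          apply_ite (restrictedMul q · (single w c)), apply_ite (restrictedMul s (single u a))]
        simp only [single_restrictedMul_single, zero_restrictedMul, restrictedMul_zero,
          ← ite_and, mul_assoc]
        exact if_congr (h u v w) rfl rfl

end MonoidAlgebra

theorem List.maximum_lt_and_maximum_append_eq_iff {α : Type*} [LinearOrder α]
    (l₁ l₂ l₃ : List α) :
    (l₁ ≠ [] ∧ l₂ ≠ [] ∧ l₂.maximum < l₁.maximum) ∧
        (l₁ ++ l₂ ≠ [] ∧ l₃ ≠ [] ∧ (l₁ ++ l₂).maximum = l₃.maximum) ↔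
      (l₂ ≠ [] ∧ l₃ ≠ [] ∧ l₂.maximum < l₃.maximum) ∧
        (l₁ ≠ [] ∧ l₂ ++ l₃ ≠ [] ∧ l₁.maximum = (l₂ ++ l₃).maximum) := by
  rw [List.maximum_append, List.maximum_append]
  constructor
  · rintro ⟨⟨h₁, h₂, h₂₁⟩, -, h₃, h₁₃⟩
    rw [max_eq_left h₂₁.le] at h₁₃
    exact ⟨⟨h₂, h₃, h₁₃ ▸ h₂₁⟩, h₁, by simp [h₂], by rw [← h₁₃, max_eq_right h₂₁.le]⟩
  · rintro ⟨⟨h₂, h₃, h₂₃⟩, h₁, -, h₁₃⟩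
    rw [max_eq_right h₂₃.le] at h₁₃
    exact ⟨⟨h₁, h₂, h₁₃ ▸ h₂₃⟩, by simp [h₁], h₃, by rw [h₁₃, max_eq_left h₂₃.le]⟩

/-- Dendriform trialgebra axiom: `(x ≺ y) ∘ z = x ∘ (y ≻ z)`. -/
theorem prec_circ (x y z : MonoidAlgebra ℚ (FreeMonoid ℕ)) :
    trCirc (trPrec x y) z = trCirc x (trSucc y z) :=
  MonoidAlgebra.restrictedMul_restrictedMul (fun u v w => by
    simpa only [FreeMonoid.toList_mul] using
      List.maximum_lt_and_maximum_append_eq_iff u.toList v.toList w.toList) x y z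
end

section
/- Fix N ≥ 1 and work in MonoidAlgebra ℚ (FreeMonoid (Fin N)) equipped with the bilinear operation ≺ defined on basis words by the max-letter rule. For any two nonempty packed words u and v, M_u ≺ M_v = Σ_w M_w, where the sum ranges over all packed words w of length |u| + |v| such that the prefix of w of length |u| packs to u, the suffix of w of length |v| packs to v, and the greatest letter of w occurs only among the first |u| positions of w. Hence the span of the M_u is closed under ≺. -/
/-!
Write a word of length `|u| + |v|` over `Fin N` as `xy` with `|x| = |u|`. It occurs in
`M_u ≺ M_v` iff `pack x = u`, `pack y = v` and `max y < max x`. Packing is invariant under maps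
that are strictly increasing on the letters, and `rank (xy)` is such a map on the letters of
`xy`; hence `pack x` and `pack y` are the packings of the prefix and the suffix of `pack (xy)`,
and `max y < max x` says exactly that the greatest letter of `pack (xy)` does not occur in its
suffix. Grouping the words `xy` by `pack (xy)` turns the sum into `∑ M_w`.
-/

/-- The rank of the letter `x` in the word `w`: one plus the number of distinct letters
of `w` smaller than `x`. -/
def rank (w : List ℕ) (x : ℕ) : ℕ := ((w.filter (· < x)).dedup).length + 1

/-- The packed word of a word `w`: if the distinct letters occurring in `w` are
`b₁ < b₂ < … < b_k`, each occurrence of `b_j` is replaced by `j`. -/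
def pack (w : List ℕ) : List ℕ := w.map (rank w)

/-- For a packed word `u`, the element `M_u` of `MonoidAlgebra ℚ (FreeMonoid (Fin N))`:
the sum of all words `w` over the alphabet `Fin N` (identified with `{1 < 2 < … < N}`)
whose packed word is `u`. -/
noncomputable def Mword (N : ℕ) (u : List ℕ) : MonoidAlgebra ℚ (FreeMonoid (Fin N)) :=
  ∑ f : Fin u.length → Fin N,
    if pack ((List.ofFn f).map (fun i => (i : ℕ) + 1)) = u
    then MonoidAlgebra.single (FreeMonoid.ofList (List.ofFn f)) (1 : ℚ) else 0

/-- The (finite) set of all packed words of length `n`; a packed word of length `n`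
has all its letters in `{1, …, n}`. -/
noncomputable def packedWords (n : ℕ) : Finset (List ℕ) :=
  ((Finset.univ : Finset (Fin n → Fin (n + 1))).image
    (fun f => (List.ofFn f).map (fun i : Fin (n + 1) => (i : ℕ)))).filter (fun w => pack w = w)

namespace List

variable {α β : Type*} [LinearOrder α] [LinearOrder β]

theorem maximum_lt_maximum_iff {l₁ l₂ : List α} :
    l₂.maximum < l₁.maximum ↔ ∃ a ∈ l₁, ∀ b ∈ l₂, b < a := by
  constructor
  · intro h
    obtain ⟨a, ha⟩ := WithBot.ne_bot_iff_exists.1 (ne_bot_of_gt h)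
    refine ⟨a, (maximum_eq_coe_iff.1 ha.symm).1, fun b hb => ?_⟩
    exact WithBot.coe_lt_coe.1 ((le_maximum_of_mem' hb).trans_lt (ha ▸ h))
  · rintro ⟨a, ha, hlt⟩
    refine lt_of_lt_of_le ?_ (le_maximum_of_mem' ha)
    cases hm : l₂.maximum with
    | bot => exact WithBot.bot_lt_coe a
    | coe m => exact WithBot.coe_lt_coe.2 (hlt m (maximum_eq_coe_iff.1 hm).1)

theorem maximum_map_lt_maximum_map_iff {f : α → β} {l₁ l₂ : List α}
    (hf : StrictMonoOn f {x | x ∈ l₁ ++ l₂}) :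
    (l₂.map f).maximum < (l₁.map f).maximum ↔ l₂.maximum < l₁.maximum := by
  simp only [maximum_lt_maximum_iff, mem_map, forall_exists_index, and_imp,
    forall_apply_eq_imp_iff₂, exists_exists_and_eq_and]
  refine exists_congr fun a => and_congr_right fun ha => forall₂_congr fun b hb => ?_
  exact hf.lt_iff_lt (by simp [hb]) (by simp [ha])

theorem foldr_max_notMem_right_iff {l₁ l₂ : List ℕ} (h : l₁ ++ l₂ ≠ []) :
    (l₁ ++ l₂).foldr max 0 ∉ l₂ ↔ l₂.maximum < l₁.maximum := by
  obtain ⟨hmem, hle⟩ := maximum_eq_coe_iff.1 (foldr_max_of_ne_nil h).symm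
  rw [maximum_lt_maximum_iff]
  constructor
  · intro hm
    refine ⟨_, (mem_append.1 hmem).resolve_right hm, fun b hb => ?_⟩
    exact (hle b (mem_append_right _ hb)).lt_of_ne fun hbm => hm (hbm ▸ hb)
  · rintro ⟨a, ha, hlt⟩ hm
    exact (hlt _ hm).not_ge (hle a (mem_append_left _ ha))

end List

theorem rank_eq_card (w : List ℕ) (x : ℕ) :
    rank w x = (w.toFinset.filter (· < x)).card + 1 := by
  rw [rank, ← List.card_toFinset, List.toFinset_filter]
  simp

theorem rank_lt_rank {w : List ℕ} {x y : ℕ} (hx : x ∈ w) (hxy : x < y) :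
    rank w x < rank w y := by
  simp only [rank_eq_card, add_lt_add_iff_right]
  refine Finset.card_lt_card ⟨fun a ha => ?_, fun hsub => ?_⟩
  · simp only [Finset.mem_filter] at ha ⊢
    exact ⟨ha.1, ha.2.trans hxy⟩
  simpa using hsub (Finset.mem_filter.2 ⟨List.mem_toFinset.2 hx, hxy⟩)

theorem strictMonoOn_rank (w : List ℕ) : StrictMonoOn (rank w) {x | x ∈ w} :=
  fun _ hx _ _ hxy => rank_lt_rank hx hxy

theorem rank_le_length {w : List ℕ} {x : ℕ} (hx : x ∈ w) : rank w x ≤ w.length := by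
  have hfilter : (w.filter (· < x)).length < w.length :=
    List.length_filter_lt_length_iff_exists.2 ⟨x, hx, by simp⟩
  exact Nat.succ_le_of_lt ((List.Sublist.length_le (List.dedup_sublist _)).trans_lt hfilter)

theorem le_length_of_mem_pack {w : List ℕ} {x : ℕ} (hx : x ∈ pack w) : x ≤ w.length := by
  obtain ⟨y, hy, rfl⟩ := List.mem_map.1 hx
  exact rank_le_length hy

theorem pack_map_of_strictMonoOn {w : List ℕ} {f : ℕ → ℕ}
    (hf : StrictMonoOn f {x | x ∈ w}) : pack (w.map f) = pack w := by
  simp only [pack, List.map_map]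
  refine List.map_congr_left fun a ha => ?_
  have hfilter :
      (w.map f).toFinset.filter (· < f a) = (w.toFinset.filter (· < a)).image f := by
    rw [show (w.map f).toFinset = w.toFinset.image f by ext; simp, Finset.filter_image]
    congr 1
    exact Finset.filter_congr fun x hx => hf.lt_iff_lt (by simpa using hx) ha
  rw [Function.comp_apply, rank_eq_card, rank_eq_card, hfilter,
    Finset.card_image_of_injOn (hf.injOn.mono fun x hx => by simp_all)]

theorem pack_map_rank {l w : List ℕ} (h : l ⊆ w) : pack (l.map (rank w)) = pack l :=
  pack_map_of_strictMonoOn ((strictMonoOn_rank w).mono fun _ hx => h hx)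

theorem pack_pack (w : List ℕ) : pack (pack w) = pack w :=
  pack_map_rank (List.Subset.refl w)

theorem mem_packedWords_iff {n : ℕ} {w : List ℕ} :
    w ∈ packedWords n ↔ pack w = w ∧ w.length = n := by
  simp only [packedWords, Finset.mem_filter, Finset.mem_image, Finset.mem_univ, true_and]
  constructor
  · rintro ⟨⟨f, rfl⟩, hw⟩
    exact ⟨hw, by simp⟩
  · rintro ⟨hw, rfl⟩
    have hle (i : Fin w.length) : w[i] < w.length + 1 :=
      Nat.lt_succ_of_le (le_length_of_mem_pack (by rw [hw]; exact List.getElem_mem _))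
    refine ⟨⟨fun i => ⟨w[i], hle i⟩, ?_⟩, hw⟩
    exact List.ext_getElem (by simp) fun i _ _ => by simp

noncomputable def precWords (u v : List ℕ) : Finset (List ℕ) :=
  (packedWords (u.length + v.length)).filter
    (fun w => pack (w.take u.length) = u ∧ pack (w.drop u.length) = v ∧
      w.foldr max 0 ∉ w.drop u.length)

theorem take_pack_append (a b : List ℕ) :
    (pack (a ++ b)).take a.length = a.map (rank (a ++ b)) := by
  rw [pack, ← List.map_take, List.take_left' rfl]

theorem drop_pack_append (a b : List ℕ) :
    (pack (a ++ b)).drop a.length = b.map (rank (a ++ b)) := by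
  rw [pack, ← List.map_drop, List.drop_left' rfl]

theorem foldr_max_pack_append_notMem_iff {a b : List ℕ} (hb : b ≠ []) :
    (pack (a ++ b)).foldr max 0 ∉ (pack (a ++ b)).drop a.length ↔ b.maximum < a.maximum := by
  have hne : pack (a ++ b) ≠ [] := by simp [pack, hb]
  have h := List.foldr_max_notMem_right_iff
    (l₁ := (pack (a ++ b)).take a.length) (l₂ := (pack (a ++ b)).drop a.length)
    (by rwa [List.take_append_drop])
  rw [List.take_append_drop, take_pack_append, drop_pack_append] at h
  rw [drop_pack_append, h]
  exact List.maximum_map_lt_maximum_map_iff ((strictMonoOn_rank _).mono fun _ hx => hx)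

theorem pack_append_mem_precWords_iff {u v a b : List ℕ} (hv : v ≠ [])
    (ha : a.length = u.length) (hb : b.length = v.length) :
    pack (a ++ b) ∈ precWords u v ↔ pack a = u ∧ pack b = v ∧ b.maximum < a.maximum := by
  have hb' : b ≠ [] := by rw [← List.length_pos_iff, hb]; exact List.length_pos_iff.2 hv
  rw [precWords, Finset.mem_filter, ← ha, foldr_max_pack_append_notMem_iff hb',
    take_pack_append, drop_pack_append, pack_map_rank (List.subset_append_left a b),
    pack_map_rank (List.subset_append_right a b), mem_packedWords_iff, pack_pack]
  simp [pack, hb]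

section TrPrec

variable {α : Type*} [LinearOrder α]

open MonoidAlgebra

theorem trPrec_sum_left {ι : Type*} (s : Finset ι)
    (x : ι → MonoidAlgebra ℚ (FreeMonoid α)) (y : MonoidAlgebra ℚ (FreeMonoid α)) :
    trPrec (∑ i ∈ s, x i) y = ∑ i ∈ s, trPrec (x i) y := by
  simp only [trPrec, coeff_sum]
  refine (Finsupp.sum_finsetSum_index (fun _ => by simp) fun p c₁ c₂ => ?_).symm
  rw [← Finsupp.sum_add]
  refine Finsupp.sum_congr fun q _ => ?_
  split_ifs <;> simp [add_mul]

theorem trPrec_sum_right {κ : Type*} (t : Finset κ)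
    (x : MonoidAlgebra ℚ (FreeMonoid α)) (y : κ → MonoidAlgebra ℚ (FreeMonoid α)) :
    trPrec x (∑ j ∈ t, y j) = ∑ j ∈ t, trPrec x (y j) := by
  simp only [trPrec, coeff_sum]
  rw [← Finsupp.sum_finsetSum_comm]
  refine Finsupp.sum_congr fun p _ => ?_
  refine (Finsupp.sum_finsetSum_index (fun _ => by simp) fun q d₁ d₂ => ?_).symm
  split_ifs <;> simp [mul_add]

theorem trPrec_single_single (p q : FreeMonoid α) (c d : ℚ) :
    trPrec (single p c) (single q d) =
      if q.toList ≠ [] ∧ q.toList.maximum < p.toList.maximum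
      then single (p * q) (c * d) else 0 := by
  have hcond : (p.toList ≠ [] ∧ q.toList ≠ [] ∧ q.toList.maximum < p.toList.maximum) ↔
      (q.toList ≠ [] ∧ q.toList.maximum < p.toList.maximum) :=
    ⟨fun h => h.2, fun h => ⟨fun hp => by simp [hp] at h, h⟩⟩
  simp only [trPrec, coeff_single]
  rw [Finsupp.sum_single_index (by simp), Finsupp.sum_single_index (by simp)]
  exact if_congr hcond rfl rfl

end TrPrec

def natWord {N : ℕ} (x : List (Fin N)) : List ℕ := x.map fun i : Fin N => (i : ℕ) + 1

theorem natWord_append {N : ℕ} (x y : List (Fin N)) :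
    natWord (x ++ y) = natWord x ++ natWord y :=
  List.map_append

theorem maximum_natWord_lt_maximum_natWord_iff {N : ℕ} {x y : List (Fin N)} :
    (natWord y).maximum < (natWord x).maximum ↔ y.maximum < x.maximum :=
  have hmono : StrictMono fun i : Fin N => (i : ℕ) + 1 := fun _ _ h => Nat.succ_lt_succ h
  List.maximum_map_lt_maximum_map_iff (hmono.strictMonoOn _)

-- `Mword` turns `List (Fin N)` into `List ℕ` by a coercion elaborated through the list monad.
theorem Mword_eq_sum_ofFn (N : ℕ) (u : List ℕ) :
    Mword N u = ∑ f : Fin u.length → Fin N, if pack (natWord (List.ofFn f)) = u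
      then MonoidAlgebra.single (FreeMonoid.ofList (List.ofFn f)) (1 : ℚ) else 0 := by
  simp only [Mword, natWord, List.bind_eq_flatMap, List.pure_def, ← List.map_eq_flatMap,
    List.map_map]
  rfl

theorem sum_Mword_eq_sum_ofFn {N n : ℕ} (S : Finset (List ℕ)) (hS : ∀ w ∈ S, w.length = n) :
    ∑ w ∈ S, Mword N w = ∑ f : Fin n → Fin N, if pack (natWord (List.ofFn f)) ∈ S
      then MonoidAlgebra.single (FreeMonoid.ofList (List.ofFn f)) (1 : ℚ) else 0 := by
  calc ∑ w ∈ S, Mword N w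
      = ∑ w ∈ S, ∑ f : Fin n → Fin N, if pack (natWord (List.ofFn f)) = w
          then MonoidAlgebra.single (FreeMonoid.ofList (List.ofFn f)) (1 : ℚ) else 0 :=
        Finset.sum_congr rfl fun w hw => by obtain rfl := hS w hw; exact Mword_eq_sum_ofFn N w
    _ = _ := by
        rw [Finset.sum_comm]
        exact Finset.sum_congr rfl fun f _ => Finset.sum_ite_eq _ _ _

theorem sum_ofFn_append {M α : Type*} [AddCommMonoid M] [Fintype α] [DecidableEq α] {m k : ℕ}
    (F : List α → M) :
    ∑ h : Fin (m + k) → α, F (List.ofFn h) =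
      ∑ f : Fin m → α, ∑ g : Fin k → α, F (List.ofFn f ++ List.ofFn g) := by
  rw [← (Fin.appendEquiv m k).sum_comp, Fintype.sum_prod_type]
  exact Finset.sum_congr rfl fun f _ => Finset.sum_congr rfl fun g _ =>
    congrArg F (List.ofFn_fin_append f g)

open MonoidAlgebra in
theorem trPrec_Mword_summands {N : ℕ} {u v : List ℕ} (hv : v ≠ []) {x y : List (Fin N)}
    (hx : x.length = u.length) (hy : y.length = v.length) :
    trPrec (if pack (natWord x) = u then single (FreeMonoid.ofList x) (1 : ℚ) else 0)
        (if pack (natWord y) = v then single (FreeMonoid.ofList y) (1 : ℚ) else 0) =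
      if pack (natWord (x ++ y)) ∈ precWords u v
      then single (FreeMonoid.ofList (x ++ y)) (1 : ℚ) else 0 := by
  have hmem := pack_append_mem_precWords_iff (u := u) (a := natWord x) (b := natWord y) hv
    (by simp [natWord, hx]) (by simp [natWord, hy])
  simp only [natWord_append, hmem, maximum_natWord_lt_maximum_natWord_iff]
  by_cases hxu : pack (natWord x) = u
  · by_cases hyv : pack (natWord y) = v
    · have hy' : y ≠ [] := by rintro rfl; exact hv (by simpa [natWord, pack] using hyv.symm)
      simp [hxu, hyv, hy', trPrec_single_single]
    · simp [hyv, trPrec]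
  · simp [hxu, trPrec]

theorem Mword_prec_general (N : ℕ) (u v : List ℕ) (hv' : v ≠ []) :
    trPrec (Mword N u) (Mword N v) =
      ∑ w ∈ (packedWords (u.length + v.length)).filter
        (fun w => pack (w.take u.length) = u ∧ pack (w.drop u.length) = v ∧
          w.foldr max 0 ∉ w.drop u.length),
        Mword N w := by
  have hlen (w) (hw : w ∈ precWords u v) : w.length = u.length + v.length :=
    (mem_packedWords_iff.1 (Finset.mem_filter.1 hw).1).2
  show _ = ∑ w ∈ precWords u v, Mword N w
  rw [sum_Mword_eq_sum_ofFn _ hlen, sum_ofFn_append (fun x => if pack (natWord x) ∈ precWords u v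
      then MonoidAlgebra.single (FreeMonoid.ofList x) (1 : ℚ) else 0),
    Mword_eq_sum_ofFn, Mword_eq_sum_ofFn, trPrec_sum_left]
  refine Finset.sum_congr rfl fun f _ => ?_
  rw [trPrec_sum_right]
  exact Finset.sum_congr rfl fun g _ => trPrec_Mword_summands hv' (by simp) (by simp)

/-- Formula for the half-product `≺` on `NCQSym`: for nonempty packed words `u` and `v`,
`M_u ≺ M_v = Σ_w M_w`, where `w` ranges over all packed words of length `|u| + |v|` whose
prefix of length `|u|` packs to `u`, whose suffix of length `|v|` packs to `v`, and whose
greatest letter occurs only among the first `|u|` positions. Hence the span of the `M_u`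
is closed under `≺`. -/
theorem Mword_prec (N : ℕ) (hN : 1 ≤ N) (u v : List ℕ) (hu : pack u = u) (hv : pack v = v)
    (hu' : u ≠ []) (hv' : v ≠ []) :
    trPrec (Mword N u) (Mword N v) =
      ∑ w ∈ (packedWords (u.length + v.length)).filter
        (fun w => pack (w.take u.length) = u ∧ pack (w.drop u.length) = v ∧
          w.foldr max 0 ∉ w.drop u.length),
        Mword N w :=
  Mword_prec_general N u v hv'
end
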